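/- A vPDA process pX is regular with respect to an equivalence ≡ lying between trace equivalence and bisimilarity (meaning bisimilarity implies ≡ implies trace equivalence) if and only if pX does not provide unbounded popping. -/
import Mathlib


/-- Kinds of actions in a visibly pushdown automaton. -/
inductive ActKind : Type
  | call | ret | int

/-- Stack-height effect of an action kind. -/
def ActKind.h : ActKind → ℤ
  | .call => 1
  | .ret => -1
  | .int => 0

/-- The visibility condition: the length of the pushed string is determined by the
action kind (`2` for calls, `0` for returns, `1` for internals). -/
def VisiblyCondition {Q Γ A : Type*} (k : A → ActKind)
    (Δ : Set (Q × Γ × A × Q × List Γ)) : Prop :=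
  ∀ r ∈ Δ, r.2.2.2.2.length = (match k r.2.2.1 with
    | .call => 2 | .ret => 0 | .int => 1)

/-- One-step transition of the PDA on configurations (control state, stack). -/
def PDAStep {Q Γ A : Type*} (Δ : Set (Q × Γ × A × Q × List Γ)) :
    Q × List Γ → A → Q × List Γ → Prop :=
  fun c a c' => ∃ p X γ q α, (p, X, a, q, α) ∈ Δ ∧
    c = (p, X :: γ) ∧ c' = (q, α ++ γ)

/-- Multi-step transition relation along a word. -/
def WSteps {S A : Type*} (tr : S → A → S → Prop) : S → List A → S → Prop
  | s, [], t => s = t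
  | s, a :: w, t => ∃ s', tr s a s' ∧ WSteps tr s' w t

/-- Stack-height effect of a word. -/
def hw {A : Type*} (k : A → ActKind) (w : List A) : ℤ :=
  (w.map (fun a => (k a).h)).sum

def Reaches {S A : Type*} (tr : S → A → S → Prop) : S → S → Prop :=
  Relation.ReflTransGen (fun s s' => ∃ a, tr s a s')

def UnboundedPopping {Q Γ A : Type*} (k : A → ActKind)
    (Δ : Set (Q × Γ × A × Q × List Γ)) (c₀ : Q × List Γ) : Prop :=
  ∀ d : ℕ, ∃ (c : Q × List Γ) (w : List A),
    Reaches (PDAStep Δ) c₀ c ∧ (∃ c', WSteps (PDAStep Δ) c w c') ∧ hw k w ≤ -(d : ℤ)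

/-- A process: a labelled transition system over the action type `A`
together with a distinguished state. -/
structure Proc (A : Type) : Type 1 where
  S : Type
  tr : S → A → S → Prop
  st : S

def IsBisimulationBetween {S T A : Type*} (tr₁ : S → A → S → Prop)
    (tr₂ : T → A → T → Prop) (R : S → T → Prop) : Prop :=
  ∀ s t, R s t →
    (∀ a s', tr₁ s a s' → ∃ t', tr₂ t a t' ∧ R s' t') ∧
    (∀ a t', tr₂ t a t' → ∃ s', tr₁ s a s' ∧ R s' t')

/-- Bisimilarity of two processes. -/
def ProcBisimilar {A : Type} (x y : Proc A) : Prop :=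
  ∃ R, IsBisimulationBetween x.tr y.tr R ∧ R x.st y.st

/-- Trace equivalence of two processes. -/
def ProcTraceEquiv {A : Type} (x y : Proc A) : Prop :=
  ∀ w : List A, (∃ s', WSteps x.tr x.st w s') ↔ (∃ t', WSteps y.tr y.st w t')

/-- A process is regular w.r.t. `E` if it is `E`-equivalent to a finite state process. -/
def RegularWrt {A : Type} (E : Proc A → Proc A → Prop) (x : Proc A) : Prop :=
  ∃ y : Proc A, Finite y.S ∧ E x y

theorem wsteps_append {S A : Type*} (tr : S → A → S → Prop) {u v : List A} {s t : S} :
    WSteps tr s (u ++ v) t ↔ ∃ m, WSteps tr s u m ∧ WSteps tr m v t := by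
  induction u generalizing s with
  | nil =>
    constructor
    · intro h; exact ⟨s, rfl, h⟩
    · rintro ⟨m, hm, h⟩; cases hm; exact h
  | cons a u ih =>
    constructor
    · rintro ⟨s', h1, h2⟩
      obtain ⟨m, hm1, hm2⟩ := ih.mp h2
      exact ⟨m, ⟨s', h1, hm1⟩, hm2⟩
    · rintro ⟨m, ⟨s', h1, hm1⟩, hm2⟩
      exact ⟨s', h1, ih.mpr ⟨m, hm1, hm2⟩⟩

theorem wsteps_snoc {S A : Type*} {tr : S → A → S → Prop} {s m m' : S} {u : List A} {a : A}
    (h1 : WSteps tr s u m) (h2 : tr m a m') : WSteps tr s (u ++ [a]) m' :=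
  (wsteps_append tr).mpr ⟨m, h1, ⟨m', h2, rfl⟩⟩

theorem hw_append {A : Type*} (k : A → ActKind) (u v : List A) :
    hw k (u ++ v) = hw k u + hw k v := by simp [hw]

theorem hw_cons {A : Type*} (k : A → ActKind) (a : A) (w : List A) :
    hw k (a :: w) = (k a).h + hw k w := by simp [hw]

theorem step_height {Q Γ A : Type*} {k : A → ActKind} {Δ : Set (Q × Γ × A × Q × List Γ)}
    (hvis : VisiblyCondition k Δ) {c c' : Q × List Γ} {a : A} (h : PDAStep Δ c a c') :
    (c'.2.length : ℤ) = c.2.length + (k a).h := by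
  obtain ⟨p, X, γ, q, α, hr, hc, hc'⟩ := h
  have hv := hvis _ hr
  subst hc hc'
  simp only [List.length_append, List.length_cons]
  cases hk : k a <;> rw [hk] at hv <;> simp only at hv <;>
    simp [hv, ActKind.h] <;> push_cast <;> ring

theorem wsteps_height {Q Γ A : Type*} {k : A → ActKind} {Δ : Set (Q × Γ × A × Q × List Γ)}
    (hvis : VisiblyCondition k Δ) {c c' : Q × List Γ} {w : List A}
    (h : WSteps (PDAStep Δ) c w c') :
    (c'.2.length : ℤ) = c.2.length + hw k w := by
  induction w generalizing c with
  | nil => cases h; simp [hw]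
  | cons a w ih =>
    obtain ⟨m, h1, h2⟩ := h
    have e1 := step_height hvis h1
    have e2 := ih h2
    rw [hw_cons]; linarith

theorem reaches_word {S A : Type*} {tr : S → A → S → Prop} {s t : S}
    (h : Reaches tr s t) : ∃ u : List A, WSteps tr s u t := by
  induction h with
  | refl => exact ⟨[], rfl⟩
  | tail _ hst ih =>
    obtain ⟨u, hu⟩ := ih
    obtain ⟨a, ha⟩ := hst
    exact ⟨u ++ [a], wsteps_snoc hu ha⟩

theorem exists_run {S A : Type*} (tr : S → A → S → Prop) :
    ∀ {w : List A} {s t : S}, WSteps tr s w t →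
      ∃ r : ℕ → S, r 0 = s ∧ r w.length = t ∧
        ∀ i (hi : i < w.length), tr (r i) w[i] (r (i + 1)) := by
  intro w
  induction w with
  | nil =>
    intro s t h; cases h
    exact ⟨fun _ => s, rfl, rfl, by intro i hi; simp at hi⟩
  | cons a w ih =>
    intro s t h
    obtain ⟨s', h1, h2⟩ := h
    obtain ⟨r, hr0, hrl, hrs⟩ := ih h2
    refine ⟨fun i => Nat.rec s (fun i _ => r i) i, rfl, hrl, ?_⟩
    intro i hi
    cases i with
    | zero =>
      show tr s (a :: w)[0] (r 0)
      rw [hr0]; exact h1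
    | succ i =>
      show tr (r i) (a :: w)[i+1] (r (i+1))
      simpa using hrs i (by simpa using hi)

theorem run_segment {S A : Type*} {tr : S → A → S → Prop} {w : List A} {r : ℕ → S}
    (hr : ∀ i (hi : i < w.length), tr (r i) w[i] (r (i + 1))) :
    ∀ j i, i ≤ j → j ≤ w.length → WSteps tr (r i) ((w.drop i).take (j - i)) (r j) := by
  intro j
  induction j with
  | zero =>
    intro i hi _
    interval_cases i
    exact rfl
  | succ j ih =>
    intro i hij hj
    rcases Nat.lt_or_ge i (j + 1) with h | h
    · have hij' : i ≤ j := by omega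
      have hseg := ih i hij' (by omega)
      have hstep := hr j (by omega)
      have he : (w.drop i).take (j + 1 - i) = (w.drop i).take (j - i) ++ [w[j]] := by
        have h1 : j + 1 - i = (j - i) + 1 := by omega
        rw [h1, List.take_succ]
        congr 1
        rw [List.getElem?_drop]
        rw [show i + (j - i) = j by omega, List.getElem?_eq_getElem (by omega)]
        rfl
      rw [he]
      exact wsteps_snoc hseg hstep
    · have : i = j + 1 := by omega
      subst this
      rw [Nat.sub_self]
      exact rfl

theorem wsteps_pow {S A : Type*} {tr : S → A → S → Prop} {s : S} {l : List A}
    (h : WSteps tr s l s) : ∀ t : ℕ, WSteps tr s ((List.replicate t l).flatten) s := by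
  intro t
  induction t with
  | zero => exact rfl
  | succ t ih =>
    rw [List.replicate_succ, List.flatten_cons]
    exact (wsteps_append tr).mpr ⟨s, h, ih⟩

theorem hw_flatten_replicate {A : Type*} (k : A → ActKind) (l : List A) (t : ℕ) :
    hw k ((List.replicate t l).flatten) = (t : ℤ) * hw k l := by
  induction t with
  | zero => simp [hw]
  | succ t ih =>
    rw [List.replicate_succ, List.flatten_cons, hw_append, ih]
    push_cast; ring

theorem first_hit (f : ℕ → ℤ) (hstep : ∀ i, f i - 1 ≤ f (i + 1)) (a b : ℕ) (v : ℤ)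
    (hab : a ≤ b) (h1 : f b ≤ v) (h2 : v < f a) :
    ∃ i, a < i ∧ i ≤ b ∧ f i = v ∧ ∀ i', a ≤ i' → i' < i → v < f i' := by
  classical
  have hex : ∃ i, a ≤ i ∧ i ≤ b ∧ f i ≤ v := ⟨b, hab, le_rfl, h1⟩
  obtain ⟨hia, hib, hfi⟩ := Nat.find_spec hex
  set i := Nat.find hex with hi
  have hmin : ∀ i', i' < i → ¬(a ≤ i' ∧ i' ≤ b ∧ f i' ≤ v) := fun i' h => Nat.find_min hex h
  have hai : a < i := by
    rcases eq_or_lt_of_le hia with h | h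
    · exfalso; rw [← h] at hfi; exact absurd hfi (not_le.mpr h2)
    · exact h
  have hprev : v < f (i - 1) := by
    by_contra hcon
    push_neg at hcon
    exact hmin (i - 1) (by omega) ⟨by omega, by omega, hcon⟩
  have hstep' : f (i - 1) - 1 ≤ f i := by
    have := hstep (i - 1)
    rwa [Nat.sub_add_cancel (by omega)] at this
  refine ⟨i, hai, hib, by omega, fun i' h1' h2' => ?_⟩
  by_contra hcon
  push_neg at hcon
  exact hmin i' h2' ⟨h1', by omega, hcon⟩

def FTr {Q Γ A : Type} (Δ : Set (Q × Γ × A × Q × List Γ)) (D : ℕ) :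
    (Q × {l : List Γ // l.length ≤ D}) → A → (Q × {l : List Γ // l.length ≤ D}) → Prop :=
  fun s a s' => ∃ Y β α, (s.1, Y, a, s'.1, α) ∈ Δ ∧ s.2.val = Y :: β ∧
    s'.2.val = (α ++ β).take D

def BisimR {Q Γ A : Type} (k : A → ActKind) (Δ : Set (Q × Γ × A × Q × List Γ))
    (c₀ : Q × List Γ) (D : ℕ) :
    (Q × List Γ) → (Q × {l : List Γ // l.length ≤ D}) → Prop :=
  fun c s =>
    ((∀ a c', ¬ PDAStep Δ c a c') ∧ (∀ a s', ¬ FTr Δ D s a s')) ∨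
    (∃ n : ℕ, 1 ≤ n ∧ n ≤ D ∧ s.1 = c.1 ∧ s.2.val = c.2.take n ∧
      Reaches (PDAStep Δ) c₀ c ∧
      ∀ w a c', WSteps (PDAStep Δ) c (w ++ [a]) c' → -(n : ℤ) + 1 ≤ hw k w)

theorem key_lemma {Q Γ A : Type} {k : A → ActKind} {Δ : Set (Q × Γ × A × Q × List Γ)}
    (hvis : VisiblyCondition k Δ) {c₀ : Q × List Γ} {D : ℕ} (hD1 : 1 ≤ D)
    (hd : ∀ c w, Reaches (PDAStep Δ) c₀ c → (∃ c', WSteps (PDAStep Δ) c w c') →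
      -(D : ℤ) < hw k w)
    {q : Q} {Xh : Γ} {β : List Γ} {m : ℕ} {q₂ : Q} {a : A} {α : List Γ}
    (s' : Q × {l : List Γ // l.length ≤ D})
    (hmD : m + 1 ≤ D)
    (hreach : Reaches (PDAStep Δ) c₀ (q, Xh :: β))
    (hinv : ∀ w a' c', WSteps (PDAStep Δ) (q, Xh :: β) (w ++ [a']) c' →
      -((m : ℤ) + 1) + 1 ≤ hw k w)
    (hrule : (q, Xh, a, q₂, α) ∈ Δ)
    (hs1 : s'.1 = q₂) (hs2 : s'.2.val = (α ++ β.take m).take D) :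
    BisimR k Δ c₀ D (q₂, α ++ β) s' := by
  have step : PDAStep Δ (q, Xh :: β) a (q₂, α ++ β) := ⟨q, Xh, β, q₂, α, hrule, rfl, rfl⟩
  have hlen : (α.length : ℤ) = (k a).h + 1 := by
    have hv := hvis _ hrule
    cases hk : k a <;> rw [hk] at hv <;> simp only at hv <;> simp [hv, ActKind.h]
  rcases Nat.eq_zero_or_pos (α.length + m) with hL | hL
  · -- stuck case : m = 0, α = []
    obtain ⟨hα, hm⟩ : α = [] ∧ m = 0 :=
      ⟨List.length_eq_zero_iff.mp (by omega), by omega⟩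
    subst hα hm
    have hka : (k a).h = -1 := by omega
    left
    constructor
    · intro a' c'' hstep''
      have hws : WSteps (PDAStep Δ) (q, Xh :: β) ([a] ++ [a']) c'' :=
        ⟨(q₂, [] ++ β), step, ⟨c'', hstep'', rfl⟩⟩
      have h0 := hinv [a] a' c'' hws
      have h1 : hw k [a] = (k a).h := by simp [hw]
      omega
    · intro a' s'' hstep''
      obtain ⟨Y, β'', α', -, hval'', -⟩ := hstep''
      rw [hs2] at hval''
      simp at hval''
  · -- main case
    right
    refine ⟨min D (α.length + m), by omega, by omega, hs1, ?_, hreach.tail ⟨a, step⟩, ?_⟩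
    · rw [hs2, ← List.take_take, List.take_add, List.take_left, List.drop_left]
    · intro w a' c'' hws
      have hws' : WSteps (PDAStep Δ) (q, Xh :: β) ((a :: w) ++ [a']) c'' :=
        ⟨(q₂, α ++ β), step, hws⟩
      have h1 := hinv (a :: w) a' c'' hws'
      rw [hw_cons] at h1
      have h3 : -(D : ℤ) < hw k w := by
        obtain ⟨mid, hmid, -⟩ := (wsteps_append _).mp hws
        exact hd _ _ (hreach.tail ⟨a, step⟩) ⟨mid, hmid⟩
      have hc : ((min D (α.length + m) : ℕ) : ℤ) = min (D : ℤ) ((α.length : ℤ) + m) := by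
        push_cast; rfl
      omega

theorem bisimR_is_bisim {Q Γ A : Type} {k : A → ActKind} {Δ : Set (Q × Γ × A × Q × List Γ)}
    (hvis : VisiblyCondition k Δ) {c₀ : Q × List Γ} {D : ℕ} (hD1 : 1 ≤ D)
    (hd : ∀ c w, Reaches (PDAStep Δ) c₀ c → (∃ c', WSteps (PDAStep Δ) c w c') →
      -(D : ℤ) < hw k w) :
    IsBisimulationBetween (PDAStep Δ) (FTr Δ D) (BisimR k Δ c₀ D) := by
  intro c s hR
  constructor
  · intro a c' hstep
    rcases hR with ⟨hstuck, -⟩ | ⟨n, hn1, hnD, hs1, hs2, hreach, hinv⟩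
    · exact absurd hstep (hstuck a c')
    obtain ⟨q, Xh, β, q₂, α, hrule, hc, hc'⟩ := hstep
    subst hc hc'
    obtain ⟨m, rfl⟩ : ∃ m, n = m + 1 := ⟨n - 1, by omega⟩
    have hs2' : s.2.val = Xh :: β.take m := by rw [hs2, List.take_succ_cons]
    refine ⟨(q₂, ⟨(α ++ β.take m).take D, by rw [List.length_take]; omega⟩), ?_, ?_⟩
    · exact ⟨Xh, β.take m, α, by rw [hs1]; exact hrule, hs2', rfl⟩
    · refine key_lemma hvis hD1 hd _ hnD hreach ?_ hrule rfl rfl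
      intro w a' c'' hws
      have := hinv w a' c'' hws
      push_cast at this ⊢
      omega
  · intro a s' hstep
    rcases hR with ⟨-, hstuck⟩ | ⟨n, hn1, hnD, hs1, hs2, hreach, hinv⟩
    · exact absurd hstep (hstuck a s')
    obtain ⟨qc, γc⟩ := c
    obtain ⟨Y, β', α, hrule, hval, hval'⟩ := hstep
    obtain ⟨m, rfl⟩ : ∃ m, n = m + 1 := ⟨n - 1, by omega⟩
    rw [hs2] at hval
    rcases γc with _ | ⟨Z, βt⟩
    · simp at hval
    · rw [List.take_succ_cons] at hval
      obtain ⟨rfl, hβ'⟩ : Z = Y ∧ β' = βt.take m := by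
        injection hval with h1 h2; exact ⟨h1, h2.symm⟩
      subst hβ'
      have hs1' : s.1 = qc := hs1
      have hrule' : (qc, Z, a, s'.1, α) ∈ Δ := by rw [hs1'] at hrule; exact hrule
      refine ⟨(s'.1, α ++ βt), ⟨qc, Z, βt, s'.1, α, hrule', rfl, rfl⟩, ?_⟩
      refine key_lemma hvis hD1 hd s' hnD hreach ?_ hrule' rfl hval'
      intro w a' c'' hws
      have := hinv w a' c'' hws
      push_cast at this ⊢
      omega

theorem regular_iff_not_unbounded_popping
    {Q Γ A : Type} [Finite Q] [Finite Γ] [Finite A] (k : A → ActKind)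
    (Δ : Set (Q × Γ × A × Q × List Γ)) (hvis : VisiblyCondition k Δ)
    (p : Q) (X : Γ)
    (E : Proc A → Proc A → Prop)
    (hbisim : ∀ x y, ProcBisimilar x y → E x y)
    (htrace : ∀ x y, E x y → ProcTraceEquiv x y) :
    RegularWrt E ⟨Q × List Γ, PDAStep Δ, (p, [X])⟩ ↔
      ¬ UnboundedPopping k Δ (p, [X]) := by
  constructor
  · -- regular → not unbounded popping
    rintro ⟨F, hFfin, hE⟩ hUP
    have htr := htrace _ _ hE
    set N := Nat.card F.S with hN
    obtain ⟨c, w, hreach, ⟨ce, hwst⟩, hhw⟩ := hUP (N + 1)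
    obtain ⟨u, hu⟩ := reaches_word hreach
    have hpda : WSteps (PDAStep Δ) (p, [X]) (u ++ w) ce :=
      (wsteps_append _).mpr ⟨c, hu, hwst⟩
    obtain ⟨t', hF⟩ := (htr (u ++ w)).mp ⟨ce, hpda⟩
    obtain ⟨r, hr0, hrL, hr⟩ := exists_run F.tr hF
    set w' := u ++ w with hw'def
    set f : ℕ → ℤ := fun i => hw k (w'.take i) with hfdef
    have hfi : ∀ i, f i = hw k (w'.take i) := fun i => rfl
    have hstepf : ∀ i, f i - 1 ≤ f (i + 1) := by
      intro i
      rw [hfi, hfi, List.take_succ, hw_append]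
      have hb : -1 ≤ hw k (w'[i]?).toList := by
        rcases h : w'[i]? with _ | b
        · simp [hw]
        · have : hw k (Option.some b).toList = (k b).h := by simp [hw]
          rw [this]
          cases k b <;> simp [ActKind.h]
      linarith
    have hulen : u.length ≤ w'.length := by simp [hw'def]
    have hfu : f u.length = hw k u := by rw [hfi, hw'def, List.take_left]
    have hfL : f w'.length = hw k u + hw k w := by
      rw [hfi, List.take_length, hw'def, hw_append]
    have hmain : ∀ m : Fin (N + 1), ∃ i, u.length < i ∧ i ≤ w'.length ∧
        f i = f u.length - ((m : ℕ) + 1) ∧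
        ∀ i', u.length ≤ i' → i' < i → f u.length - ((m : ℕ) + 1) < f i' := by
      intro m
      apply first_hit f hstepf u.length w'.length _ hulen
      · rw [hfL, hfu]
        have hm : ((m : ℕ) : ℤ) ≤ (N : ℤ) := by exact_mod_cast Nat.lt_succ_iff.mp m.isLt
        have : hw k w ≤ -((N : ℤ) + 1) := by push_cast at hhw; linarith
        linarith
      · have : (0 : ℤ) ≤ ((m : ℕ) : ℤ) := Int.natCast_nonneg _
        linarith
    choose I hI1 hI2 hI3 hI4 using hmain
    haveI : Fintype F.S := Fintype.ofFinite F.S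
    have hcard : Fintype.card F.S < Fintype.card (Fin (N + 1)) := by
      rw [Fintype.card_fin, ← Nat.card_eq_fintype_card, ← hN]
      omega
    obtain ⟨m₁, m₂, hne, heq⟩ :=
      Fintype.exists_ne_map_eq_of_card_lt (fun m : Fin (N + 1) => r (I m)) hcard
    have hkey : ∀ m m' : Fin (N + 1), I m < I m' → r (I m) = r (I m') → False := by
      intro m m' hlt hreq
      have hfj_lt : f (I m') < f (I m) := by
        have h := hI4 m' (I m) (le_of_lt (hI1 m)) hlt
        rw [hI3 m']
        exact h
      have hloopseg : WSteps F.tr (r (I m)) ((w'.drop (I m)).take (I m' - I m)) (r (I m')) :=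
        run_segment hr (I m') (I m) hlt.le (hI2 m')
      rw [← hreq] at hloopseg
      set l := (w'.drop (I m)).take (I m' - I m) with hldef
      have hπ : WSteps F.tr F.st (w'.take (I m)) (r (I m)) := by
        have h := run_segment hr (I m) 0 (Nat.zero_le _) (hI2 m)
        simpa [hr0] using h
      have hhl : hw k l = f (I m') - f (I m) := by
        have e : w'.take (I m') = w'.take (I m) ++ l := by
          rw [hldef, ← List.take_add, Nat.add_sub_cancel' hlt.le]
        have h := congrArg (hw k) e
        rw [hw_append, ← hfi, ← hfi] at h
        linarith
      have hl1 : hw k l ≤ -1 := by omega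
      set t := (f (I m) + 2).toNat with htdef
      have htt : f (I m) + 2 ≤ (t : ℤ) := Int.self_le_toNat _
      have hpump : WSteps F.tr F.st (w'.take (I m) ++ (List.replicate t l).flatten) (r (I m)) :=
        (wsteps_append _).mpr ⟨r (I m), hπ, wsteps_pow hloopseg t⟩
      obtain ⟨cf, hcf⟩ := (htr _).mpr ⟨r (I m), hpump⟩
      have hh := wsteps_height hvis hcf
      have htot : hw k (w'.take (I m) ++ (List.replicate t l).flatten)
          = f (I m) + (t : ℤ) * hw k l := by
        rw [hw_append, hw_flatten_replicate, hfi]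
      have hneg : (t : ℤ) * hw k l ≤ -(t : ℤ) := by
        have h0 : (0 : ℤ) ≤ (t : ℤ) := Int.natCast_nonneg _
        nlinarith
      have hcf0 : (0 : ℤ) ≤ (cf.2.length : ℤ) := Int.natCast_nonneg _
      simp only [htot] at hh
      simp only [List.length_cons, List.length_nil] at hh
      omega
    have hIne : I m₁ ≠ I m₂ := by
      intro hIeq
      apply hne
      have h1 := hI3 m₁
      have h2 := hI3 m₂
      rw [hIeq, h2] at h1
      have : ((m₁ : ℕ) : ℤ) = ((m₂ : ℕ) : ℤ) := by omega
      exact Fin.ext (by exact_mod_cast this)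
    rcases lt_or_gt_of_ne hIne with h | h
    · exact hkey m₁ m₂ h heq
    · exact hkey m₂ m₁ h heq.symm
  · -- not unbounded popping → regular
    intro hnUP
    obtain ⟨d₀, hd₀⟩ : ∃ d : ℕ, ∀ (c : Q × List Γ) (w : List A),
        Reaches (PDAStep Δ) (p, [X]) c → (∃ c', WSteps (PDAStep Δ) c w c') →
        -(d : ℤ) < hw k w := by
      by_contra hcon
      push_neg at hcon
      exact hnUP fun d => by
        obtain ⟨c, w, h1, h2, h3⟩ := hcon d
        exact ⟨c, w, h1, h2, h3⟩
    set D := max d₀ 1 with hDdef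
    have hD1 : 1 ≤ D := le_max_right _ _
    have hd : ∀ (c : Q × List Γ) (w : List A),
        Reaches (PDAStep Δ) (p, [X]) c → (∃ c', WSteps (PDAStep Δ) c w c') →
        -(D : ℤ) < hw k w := by
      intro c w h1 h2
      have := hd₀ c w h1 h2
      have hle : (d₀ : ℤ) ≤ (D : ℤ) := by exact_mod_cast le_max_left d₀ 1
      omega
    refine ⟨⟨Q × {l : List Γ // l.length ≤ D}, FTr Δ D,
      (p, ⟨[X], by simp [hD1]⟩)⟩, ?_, ?_⟩
    · haveI : Finite {l : List Γ // l.length ≤ D} := (List.finite_length_le Γ D).to_subtype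
      show Finite (Q × {l : List Γ // l.length ≤ D})
      infer_instance
    · apply hbisim
      refine ⟨BisimR k Δ (p, [X]) D, bisimR_is_bisim hvis hD1 hd, ?_⟩
      right
      refine ⟨1, le_rfl, hD1, rfl, rfl, Relation.ReflTransGen.refl, ?_⟩
      intro w a c' hws
      obtain ⟨mid, h1, h2⟩ := (wsteps_append _).mp hws
      obtain ⟨mid2, hstep, -⟩ := h2
      obtain ⟨pp, YY, γγ, qq, αα, -, hmideq, -⟩ := hstep
      have hlen := wsteps_height hvis h1
      rw [hmideq] at hlen
      simp only [List.length_cons, List.length_nil] at hlen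
      have : (0 : ℤ) ≤ (γγ.length : ℤ) := Int.natCast_nonneg _
      omega
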